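/- For n ≥ 3 countries, there are no nonempty war-stable networks under NN-vulnerability: if g is a nonempty network satisfying (S1) no country is vulnerable at g, and (S2) no country is vulnerable at g + jk for any non-link jk, then there is some link ik ∈ g such that i is not vulnerable at g − ik, violating (S3). -/
import Mathlib


open Finset

/-- The allies (neighbors) of `i` in network `g`, as a `Finset`. -/
noncomputable def nbrs {V : Type*} [Fintype V] (g : SimpleGraph V) (i : V) : Finset V :=
  @Finset.filter _ (fun j => g.Adj i j) (Classical.decPred _) Finset.univ

/-- The network `g` with the alliance `jk` added. -/
def addE {V : Type*} (g : SimpleGraph V) (j k : V) : SimpleGraph V :=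
  g ⊔ SimpleGraph.fromEdgeSet {s(j, k)}

/-- The network `g` with the alliance `jk` deleted. -/
def delE {V : Type*} (g : SimpleGraph V) (j k : V) : SimpleGraph V :=
  g.deleteEdges {s(j, k)}

/-- Country `i` is (NN-)vulnerable at network `g`: some aggressor `j` together with a
coalition `C` of its allies can defeat `i` and its remaining allies. -/
def Vul {V : Type*} [Fintype V] [DecidableEq V] (g : SimpleGraph V)
    (M : Finset V → ℝ) (γ : Finset V → Finset V → ℝ) (i : V) : Prop :=
  ∃ (j : V) (C : Finset V),
    C ⊆ insert j (nbrs g j) ∧ j ∈ C ∧ i ∉ C ∧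
    γ C (insert i (nbrs g i \ C)) * M (insert i (nbrs g i \ C)) < M C

lemma mem_nbrs {V : Type*} [Fintype V] (g : SimpleGraph V) (i x : V) :
    x ∈ nbrs g i ↔ g.Adj i x := by simp [nbrs]

lemma adj_delE {V : Type*} (g : SimpleGraph V) (i k a b : V) :
    (delE g i k).Adj a b ↔ g.Adj a b ∧ ¬((a = i ∧ b = k) ∨ (a = k ∧ b = i)) := by
  simp [delE, SimpleGraph.deleteEdges_adj, Sym2.eq_iff]

lemma adj_addE {V : Type*} (g : SimpleGraph V) (j k a b : V) :
    (addE g j k).Adj a b ↔ g.Adj a b ∨ (((a = j ∧ b = k) ∨ (a = k ∧ b = j)) ∧ a ≠ b) := by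
  simp [addE, SimpleGraph.fromEdgeSet_adj, Sym2.eq_iff]

/-- No nonempty network is war-stable under NN-vulnerability: if no country is
vulnerable at `g` (S1) nor at `g + jk` for any non-link `jk` (S2), then some link `ik ∈ g`
can be deleted with `i` not becoming vulnerable, violating (S3). -/
theorem no_nonempty_war_stable {n : ℕ} (hn : 3 ≤ n)
    (M : Finset (Fin n) → ℝ) (γ : Finset (Fin n) → Finset (Fin n) → ℝ)
    (hM0 : ∀ C : Finset (Fin n), C.Nonempty → 0 ≤ M C)
    (hMmono : ∀ C C' : Finset (Fin n), C ⊆ C' → M C ≤ M C')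
    (hγpos : ∀ C C' : Finset (Fin n), 0 < γ C C')
    (hγ1 : ∀ C C'' D : Finset (Fin n), C ⊆ C'' → γ C'' D ≤ γ C D)
    (hγ2 : ∀ C D D' : Finset (Fin n), D' ⊆ D → γ C D' ≤ γ C D)
    (g : SimpleGraph (Fin n)) (hne : ∃ u v : Fin n, g.Adj u v)
    (hS1 : ∀ v : Fin n, ¬ Vul g M γ v)
    (hS2 : ∀ j k : Fin n, j ≠ k → ¬ g.Adj j k → ∀ v : Fin n, ¬ Vul (addE g j k) M γ v) :
    ∃ i k : Fin n, g.Adj i k ∧ ¬ Vul (delE g i k) M γ i := by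
  obtain ⟨i, k, hik⟩ := hne
  refine ⟨i, k, hik, ?_⟩
  rintro ⟨j, C, hC, hjC, hiC, hlt⟩
  have hik' : i ≠ k := hik.ne
  have hij : j ≠ i := fun h => hiC (h ▸ hjC)
  -- neighbors of j are not enlarged by deletion
  have hCg : C ⊆ insert j (nbrs g j) := by
    intro x hx
    rcases Finset.mem_insert.1 (hC hx) with h | h
    · exact Finset.mem_insert.2 (Or.inl h)
    · exact Finset.mem_insert.2 (Or.inr ((mem_nbrs g j x).2
        ((adj_delE g i k j x).1 ((mem_nbrs _ j x).1 h)).1))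
  -- neighbors of i after deletion
  have hNdel : nbrs (delE g i k) i = (nbrs g i).erase k := by
    ext x
    simp only [mem_nbrs, adj_delE, Finset.mem_erase]
    tauto
  by_cases hkC : k ∈ C
  · -- then i's defense is the same at g, contradicting S1
    apply hS1 i
    refine ⟨j, C, hCg, hjC, hiC, ?_⟩
    have : nbrs g i \ C = nbrs (delE g i k) i \ C := by
      rw [hNdel]
      ext x
      simp only [Finset.mem_sdiff, Finset.mem_erase]
      constructor
      · rintro ⟨h1, h2⟩
        exact ⟨⟨fun hx => h2 (hx ▸ hkC), h1⟩, h2⟩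
      · rintro ⟨⟨-, h1⟩, h2⟩
        exact ⟨h1, h2⟩
    rw [this]
    exact hlt
  · -- k joins the coalition
    have hjk' : j ≠ k := fun h => hkC (h ▸ hjC)
    set D := insert i (nbrs (delE g i k) i \ C) with hD
    have hDset : insert i (nbrs g i \ insert k C) = D := by
      rw [hD, hNdel]
      ext x
      simp only [Finset.mem_insert, Finset.mem_sdiff, Finset.mem_erase]
      tauto
    have hM : M C ≤ M (insert k C) := hMmono _ _ (Finset.subset_insert _ _)
    have hγ : γ (insert k C) D ≤ γ C D := hγ1 C (insert k C) D (Finset.subset_insert _ _)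
    have hD0 : 0 ≤ M D := hM0 D ⟨i, Finset.mem_insert_self _ _⟩
    have hlt' : γ (insert k C) D * M D < M (insert k C) :=
      lt_of_le_of_lt (mul_le_mul_of_nonneg_right hγ hD0) (lt_of_lt_of_le hlt hM)
    have hiKC : i ∉ insert k C := by
      simp only [Finset.mem_insert]
      rintro (h | h)
      · exact hik' h
      · exact hiC h
    have hjKC : j ∈ insert k C := Finset.mem_insert_of_mem hjC
    by_cases hjk : g.Adj j k
    · -- coalition insert k C works at g, contradicting S1
      apply hS1 i
      refine ⟨j, insert k C, ?_, hjKC, hiKC, ?_⟩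
      · intro x hx
        rcases Finset.mem_insert.1 hx with h | h
        · exact Finset.mem_insert.2 (Or.inr ((mem_nbrs g j x).2 (h ▸ hjk)))
        · exact hCg h
      · rw [hDset]
        exact hlt'
    · -- add link jk, contradicting S2
      apply hS2 j k hjk' hjk i
      refine ⟨j, insert k C, ?_, hjKC, hiKC, ?_⟩
      · intro x hx
        rcases Finset.mem_insert.1 hx with h | h
        · refine Finset.mem_insert.2 (Or.inr ((mem_nbrs _ j x).2 ?_))
          rw [adj_addE]
          exact Or.inr ⟨Or.inl ⟨rfl, h⟩, h ▸ hjk'⟩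
        · rcases Finset.mem_insert.1 (hCg h) with h' | h'
          · exact Finset.mem_insert.2 (Or.inl h')
          · exact Finset.mem_insert.2 (Or.inr ((mem_nbrs _ j x).2 (by
              rw [adj_addE]; exact Or.inl ((mem_nbrs g j x).1 h'))))
      · have hNi : nbrs (addE g j k) i = nbrs g i := by
          ext x
          simp only [mem_nbrs, adj_addE]
          constructor
          · rintro (h | ⟨(⟨h1, -⟩ | ⟨h1, -⟩), -⟩)
            · exact h
            · exact absurd h1.symm hij
            · exact absurd h1 hik'
          · exact Or.inl
        rw [hNi, hDset]
        exact hlt'
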